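/- arXiv:2002.10928 — 2 statements merged into one kernel-verified Lean document; each statement's English description precedes it below -/
import Mathlib

section
/- Let n ≥ 1, let P be a Young diagram of order n with offset a = (#P)/n, and let k ∈ {1,...,n}. Then P admits a balanced semistandard {1,...,n}-filling that is α_i-codominant for all i = 1, ..., k−1, if and only if a is an integer and the row lengths satisfy #_k P ≥ a ≥ #_{n−k+1} P. -/
/-- A Young diagram of order `n`, given by its (weakly decreasing) row lengths,
vanishing from row `n` on. Rows are indexed from `0`. -/
def IsYoung (n : ℕ) (P : ℕ → ℕ) : Prop :=
  (∀ i, P (i + 1) ≤ P i) ∧ ∀ i, n ≤ i → P i = 0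

/-- The total number of boxes of a Young diagram of order `n`. -/
def ysize (n : ℕ) (P : ℕ → ℕ) : ℕ := ∑ i ∈ Finset.range n, P i

/-- The height of the `j`-th column (columns indexed from `0`). -/
def colH (n : ℕ) (P : ℕ → ℕ) (j : ℕ) : ℕ :=
  ((Finset.range n).filter (fun i => j < P i)).card

/-- The number of boxes of the skew diagram `P/Q`. -/
def skewSize (n : ℕ) (P Q : ℕ → ℕ) : ℕ := ∑ i ∈ Finset.range n, (P i - Q i)

/-- The skew diagram `P/Q` has thickness at most `m`: every column has at most
`m` boxes. -/
def ThickLE (n : ℕ) (P Q : ℕ → ℕ) (m : ℕ) : Prop :=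
  ∀ j, colH n P j ≤ colH n Q j + m

/-- `T` is a semistandard filling of the skew diagram `P/Q`: rows weakly increase
from left to right, columns strictly increase from top to bottom.
`T i j` is the entry in row `i`, column `j`. -/
def SkewSemistd (P Q : ℕ → ℕ) (T : ℕ → ℕ → ℕ) : Prop :=
  (∀ i j, Q i ≤ j → j + 1 < P i → T i j ≤ T i (j + 1)) ∧
  (∀ i j, Q i ≤ j → j < P (i + 1) → T i j < T (i + 1) j)

/-- All entries of the filling `T` of `P/Q` belong to the alphabet `{lo, …, hi}`. -/
def InAlpha (P Q : ℕ → ℕ) (T : ℕ → ℕ → ℕ) (lo hi : ℕ) : Prop :=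
  ∀ i j, Q i ≤ j → j < P i → lo ≤ T i j ∧ T i j ≤ hi

/-- The number of occurrences of the symbol `s` among the first `j` columns of the
filling `T` of `P/Q`. -/
def cntCols (n : ℕ) (P Q : ℕ → ℕ) (T : ℕ → ℕ → ℕ) (s : ℕ) (j : ℕ) : ℕ :=
  ∑ i ∈ Finset.range n, ((Finset.Ico (Q i) (min j (P i))).filter (fun c => T i c = s)).card

/-- The total number of occurrences of the symbol `s` in the filling `T` of `P/Q`. -/
def cntAll (n : ℕ) (P Q : ℕ → ℕ) (T : ℕ → ℕ → ℕ) (s : ℕ) : ℕ :=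
  ∑ i ∈ Finset.range n, ((Finset.Ico (Q i) (P i)).filter (fun c => T i c = s)).card

/-- The filling `T` of `P/Q` is balanced with respect to the alphabet `{lo, …, hi}`:
each symbol occurs exactly `(#P/Q)/(hi+1-lo)` times. -/
def BalancedF (n : ℕ) (P Q : ℕ → ℕ) (T : ℕ → ℕ → ℕ) (lo hi : ℕ) : Prop :=
  ∀ s, lo ≤ s → s ≤ hi → (hi + 1 - lo) * cntAll n P Q T s = skewSize n P Q

/-- The filling `T` of `P/Q` is `α_i`-codominant: among the first `j` columns there
are at least as many occurrences of `i+1` as of `i`, for every `j`. -/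
def Codom (n : ℕ) (P Q : ℕ → ℕ) (T : ℕ → ℕ → ℕ) (i : ℕ) : Prop :=
  ∀ j, cntCols n P Q T i j ≤ cntCols n P Q T (i + 1) j

/-- The length of the bridge at height `i` (for `1 ≤ i ≤ n`) of the skew diagram
`P/Q`: the number of columns whose height in `Q` is `i-1` and in `P` is `i`. -/
def bridge (n : ℕ) (P Q : ℕ → ℕ) (i : ℕ) : ℕ :=
  ((Finset.range (P 0)).filter (fun j => colH n Q j = i - 1 ∧ colH n P j = i)).card

/-!
Let `a` be the number of `1`s. In a semistandard filling they fill the first `a` boxes of the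
top row, so codominance makes every symbol `s ≤ k` occur `a` times within the first `a` columns.
Symbols `≤ k` only live in the top `k` rows, whence `#_k P ≥ a`; and if `#_{n-k+1} P > a`, the top
entry of column `a + 1` would be a symbol `≤ k` outside the first `a` columns.

Conversely, a filling amounts to a chain `∅ = Λ 0 ⊆ Λ 1 ⊆ ⋯ ⊆ Λ n = P`, `Λ s` being the shape
occupied by the symbols `≤ s`, in which consecutive shapes have interlacing rows and differ by
`a` boxes. Taking `Λ s` to be the `s × a` rectangle for `s ≤ k` makes the filling codominant;
above `k` we peel strips off `P`. Interlacing leaves each row of the next shape free in an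
interval, so a shape of the right size exists once the interval ends sum to at most and at least
`s a`; this is what the averaging inequalities `2a ≤ ν 0 + ν k` and `ν (s-k) + ν s ≤ 2a`
give for the row lengths `ν` of the current shape, which has `s + 1` rows.
-/

open Finset

theorem exists_bounded_sum_range_eq (lo hi : ℕ → ℕ) (hle : ∀ i, lo i ≤ hi i) :
    ∀ N t, ∑ i ∈ range N, lo i ≤ t → t ≤ ∑ i ∈ range N, hi i →
      ∃ μ : ℕ → ℕ, (∀ i, lo i ≤ μ i ∧ μ i ≤ hi i) ∧ ∑ i ∈ range N, μ i = t := by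
  intro N
  induction N with
  | zero => exact fun t _ ht => ⟨lo, fun i => ⟨le_rfl, hle i⟩, by simp_all⟩
  | succ N ih =>
    intro t hlo hhi
    rw [sum_range_succ] at hlo hhi
    have hsum : ∑ i ∈ range N, lo i ≤ ∑ i ∈ range N, hi i := sum_le_sum fun i _ => hle i
    obtain ⟨x, hx₁, hx₂, hx₃⟩ : ∃ x, x ≤ hi N ∧ x ≤ t - ∑ i ∈ range N, lo i ∧
        (x = hi N ∨ x = t - ∑ i ∈ range N, lo i) :=
      ⟨_, min_le_left _ _, min_le_right _ _, min_choice _ _⟩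
    obtain ⟨μ, hμ, hμsum⟩ := ih (t - x) (by omega) (by omega)
    refine ⟨fun i => if i = N then x else μ i, fun i => ?_, ?_⟩
    · by_cases h : i = N
      · simp only [h, ↓reduceIte]; have := hle N; omega
      · simp only [if_neg h]; exact hμ i
    · have hlt : ∑ i ∈ range N, (if i = N then x else μ i) = ∑ i ∈ range N, μ i :=
        sum_congr rfl fun i hi => if_neg (mem_range.1 hi).ne
      rw [sum_range_succ, hlt, hμsum, if_pos rfl]
      omega

/-- The row lengths of the part of a filling occupied by the symbols `1, …, s`. -/
structure IsAdmissible (k a s : ℕ) (ν : ℕ → ℕ) : Prop where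
  antitone : Antitone ν
  vanish : ∀ i, s ≤ i → ν i = 0
  sum : ∑ i ∈ range s, ν i = s * a
  le_of_lt : ∀ i < k, a ≤ ν i
  le_of_ge : ∀ i, s - k ≤ i → ν i ≤ a

namespace IsAdmissible

variable {k a s : ℕ} {ν : ℕ → ℕ}

theorem two_mul_le_add (h : IsAdmissible k a (s + 1) ν) (hk : 1 ≤ k) (hks : k ≤ s) :
    2 * a ≤ ν 0 + ν k := by
  set q := s + 1 - k
  set p := min k q
  obtain ⟨r, hr⟩ : ∃ r, k = p + r := ⟨k - p, by omega⟩
  have hsplit := h.sum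
  rw [← sum_range_add_sum_Ico ν (show k ≤ s + 1 by omega),
    ← sum_range_add_sum_Ico ν (show p ≤ k by omega)] at hsplit
  have htot : (s + 1) * a = p * a + r * a + q * a := by
    rw [show s + 1 = p + r + q by omega]; ring
  have h₁ : ∑ i ∈ range p, ν i ≤ p * ν 0 := by
    simpa using sum_le_card_nsmul (range p) ν _ fun i _ => h.antitone (Nat.zero_le i)
  have h₂ : ∑ i ∈ Ico p k, ν i ≤ r * a := by
    simpa [hr] using sum_le_card_nsmul (Ico p k) ν a fun i hi => h.le_of_ge i (by simp at hi; omega)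
  have h₃ : ∑ i ∈ Ico k (s + 1), ν i ≤ q * ν k := by
    simpa using sum_le_card_nsmul (Ico k (s + 1)) ν _ fun i hi => h.antitone (mem_Ico.1 hi).1
  obtain ⟨x, hx⟩ := Nat.exists_eq_add_of_le (h.le_of_lt 0 hk)
  by_contra! hlt
  have hpq : p * x ≤ q * x := Nat.mul_le_mul_right x (min_le_right _ _)
  have hq : q * (x + ν k + 1) ≤ q * a := Nat.mul_le_mul_left q (by omega)
  have hq1 : 1 ≤ q := by omega
  have hpx : p * ν 0 = p * a + p * x := by rw [hx]; ring
  nlinarith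

theorem add_le_two_mul (h : IsAdmissible k a (s + 1) ν) (hk : 1 ≤ k) (hks : k ≤ s) :
    ν (s - k) + ν s ≤ 2 * a := by
  set m := s + 1 - k
  set q := max m k
  obtain ⟨r, hr⟩ : ∃ r, s + 1 = q + r := ⟨s + 1 - q, by omega⟩
  have hsplit := h.sum
  rw [← sum_range_add_sum_Ico ν (show q ≤ s + 1 by omega),
    ← sum_range_add_sum_Ico ν (show m ≤ q by omega)] at hsplit
  have h₁ : m * ν (s - k) ≤ ∑ i ∈ range m, ν i := by
    simpa using card_nsmul_le_sum (range m) ν _ fun i hi => h.antitone (by simp at hi; omega)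
  have h₂ : (q - m) * a ≤ ∑ i ∈ Ico m q, ν i := by
    simpa using card_nsmul_le_sum (Ico m q) ν a fun i hi => h.le_of_lt i (by simp at hi; omega)
  have h₃ : r * ν s ≤ ∑ i ∈ Ico q (s + 1), ν i := by
    simpa [hr] using card_nsmul_le_sum (Ico q (s + 1)) ν _ fun i hi =>
      h.antitone (by simp at hi; omega)
  obtain ⟨y, hy⟩ := Nat.exists_eq_add_of_le (h.le_of_ge s (by omega))
  by_contra! hlt
  have hrm : r * y ≤ m * y := Nat.mul_le_mul_right y (by omega)
  have hm : m * (a + y + 1) ≤ m * ν (s - k) := Nat.mul_le_mul_left m (by omega)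
  have hm1 : 1 ≤ m := by omega
  have htot : (s + 1) * a = m * a + (q - m) * a + r * a := by
    rw [show s + 1 = m + (q - m) + r by omega]; ring
  have hry : r * a = r * ν s + r * y := by rw [hy]; ring
  nlinarith

theorem exists_interlacing (h : IsAdmissible k a (s + 1) ν) (hk : 1 ≤ k) (hks : k ≤ s) :
    ∃ μ, IsAdmissible k a s μ ∧ ∀ i, ν (i + 1) ≤ μ i ∧ μ i ≤ ν i := by
  set lo : ℕ → ℕ := fun i => max (ν (i + 1)) (if i < k then a else 0)
  set hi : ℕ → ℕ := fun i => if s ≤ i then 0 else if s - k ≤ i then min (ν i) a else ν i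
  have hsucc : (s + 1) * a = s * a + a := by ring
  have hle : ∀ i, lo i ≤ hi i := by
    intro i
    have := h.antitone (Nat.le_add_right i 1)
    have := fun hsi : s ≤ i => h.vanish (i + 1) (by omega)
    have := h.le_of_lt i
    have := fun hsi : s - k ≤ i => h.le_of_ge (i + 1) (by omega)
    simp only [lo, hi]
    split_ifs <;> omega
  have hlo : ∑ i ∈ range s, lo i ≤ s * a := by
    have hterm : ∀ i ∈ range s, lo i ≤ ν (i + 1) + if i = k - 1 then a - ν k else 0 := by
      intro i _
      have := h.le_of_lt (i + 1)
      have := fun hik : i = k - 1 => congrArg ν (show i + 1 = k by omega)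
      simp only [lo]
      split_ifs <;> omega
    have hshift := sum_range_succ' ν s
    rw [h.sum] at hshift
    have := sum_le_sum hterm
    rw [sum_add_distrib, sum_ite_eq' (range s), if_pos (mem_range.2 (by omega))] at this
    have := h.two_mul_le_add hk hks
    have := h.le_of_lt 0 hk
    omega
  have hhi : s * a ≤ ∑ i ∈ range s, hi i := by
    have hterm : ∀ i ∈ range s, ν i ≤ hi i + if i = s - k then ν i - a else 0 := by
      intro i hi'
      have := mem_range.1 hi'
      have := fun hsi : s + 1 - k ≤ i => h.le_of_ge i hsi
      simp only [hi]
      split_ifs <;> omega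
    have htotal := sum_range_succ ν s
    rw [h.sum] at htotal
    have := sum_le_sum hterm
    rw [sum_add_distrib, sum_ite_eq' (range s), if_pos (mem_range.2 (by omega))] at this
    have := h.add_le_two_mul hk hks
    have := h.le_of_ge s (by omega)
    omega
  obtain ⟨μ, hμ, hsum⟩ := exists_bounded_sum_range_eq lo hi hle s (s * a) hlo hhi
  have hμν : ∀ i, ν (i + 1) ≤ μ i ∧ μ i ≤ ν i := fun i =>
    ⟨(le_max_left _ _).trans (hμ i).1, (hμ i).2.trans (by simp only [hi]; split_ifs <;> omega)⟩
  refine ⟨μ, ⟨antitone_nat_of_succ_le fun i => (hμν (i + 1)).2.trans (hμν i).1,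
    fun i hsi => ?_, hsum, fun i hik => ?_, fun i hsi => ?_⟩, hμν⟩
  · have := (hμ i).2
    simp only [hi, if_pos hsi] at this
    omega
  · have := (hμ i).1
    simp only [lo, if_pos hik] at this
    omega
  · have := (hμ i).2
    simp only [hi] at this
    split_ifs at this <;> omega

end IsAdmissible

def rect (a s : ℕ) (i : ℕ) : ℕ := if i < s then a else 0

theorem sum_range_rect (a s : ℕ) : ∑ i ∈ range s, rect a s i = s * a := by
  unfold rect
  rw [sum_congr rfl fun i hi => if_pos (mem_range.1 hi), sum_const, card_range, smul_eq_mul]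

structure IsBalancedChain (k a s : ℕ) (Λ : ℕ → ℕ → ℕ) : Prop where
  interlace : ∀ t < s, ∀ i, Λ (t + 1) (i + 1) ≤ Λ t i ∧ Λ t i ≤ Λ (t + 1) i
  vanish : ∀ t ≤ s, ∀ i, t ≤ i → Λ t i = 0
  sum : ∀ t ≤ s, ∑ i ∈ range t, Λ t i = t * a
  eq_rect : ∀ t ≤ k, Λ t = rect a t

theorem IsAdmissible.exists_isBalancedChain {k a s : ℕ} {ν : ℕ → ℕ} (h : IsAdmissible k a s ν)
    (hk : 1 ≤ k) (hks : k ≤ s) : ∃ Λ, IsBalancedChain k a s Λ ∧ Λ s = ν := by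
  induction s, hks using Nat.le_induction generalizing ν with
  | base =>
    have hν : ν = rect a k := funext fun i => by
      unfold rect
      split_ifs with hi
      · exact le_antisymm (h.le_of_ge i (by omega)) (h.le_of_lt i hi)
      · exact h.vanish i (by omega)
    refine ⟨rect a, ⟨fun t _ i => ?_, fun t _ i hi => if_neg (by omega),
      fun t _ => sum_range_rect a t, fun t _ => rfl⟩, hν.symm⟩
    unfold rect
    split_ifs <;> omega
  | succ s hks ih =>
    obtain ⟨μ, hμ, hνμ⟩ := h.exists_interlacing hk hks
    obtain ⟨Λ, hΛ, hΛs⟩ := ih hμ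
    refine ⟨fun t => if t ≤ s then Λ t else ν, ⟨fun t ht i => ?_, fun t ht => ?_, fun t ht => ?_,
      fun t ht => ?_⟩, by simp⟩
    · rcases lt_or_eq_of_le (Nat.lt_succ_iff.1 ht) with ht | rfl
      · simpa [ht.le, Nat.succ_le_of_lt ht] using hΛ.interlace t ht i
      · simpa [hΛs] using hνμ i
    · rcases Nat.le_succ_iff.1 ht with ht | rfl
      · simpa [ht] using hΛ.vanish t ht
      · simpa using h.vanish
    · rcases Nat.le_succ_iff.1 ht with ht | rfl
      · simpa [ht] using hΛ.sum t ht
      · simpa using h.sum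
    · simpa [ht.trans hks] using hΛ.eq_rect t ht

namespace IsBalancedChain

variable {k a s : ℕ} {Λ : ℕ → ℕ → ℕ}

theorem mono (hΛ : IsBalancedChain k a s Λ) {t u : ℕ} (htu : t ≤ u) (hu : u ≤ s) (i : ℕ) :
    Λ t i ≤ Λ u i := by
  induction u, htu using Nat.le_induction with
  | base => exact le_rfl
  | succ u _ ih => exact (ih (by omega)).trans (hΛ.interlace u (by omega) i).2

theorem sum_range_eq (hΛ : IsBalancedChain k a s Λ) {t N : ℕ} (ht : t ≤ s) (hN : t ≤ N) :
    ∑ i ∈ range N, Λ t i = t * a := by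
  rw [← hΛ.sum t ht]
  exact (sum_subset (range_subset_range.2 hN) fun i _ hi =>
    hΛ.vanish t ht i (by simpa using hi)).symm

end IsBalancedChain

/-- The filling whose entries `≤ s` occupy the shape `Λ s`. -/
noncomputable def fillOfChain (Λ : ℕ → ℕ → ℕ) (i c : ℕ) : ℕ := sInf {s | c < Λ s i}

section fillOfChain

variable {n k a : ℕ} {P : ℕ → ℕ} {Λ : ℕ → ℕ → ℕ}

theorem fillOfChain_le_iff (hΛ : IsBalancedChain k a n Λ) (hΛn : Λ n = P)
    {i c s : ℕ} (hc : c < P i) (hs : s ≤ n) :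
    fillOfChain Λ i c ≤ s ↔ c < Λ s i := by
  refine ⟨fun hle => ?_, fun h => Nat.sInf_le h⟩
  have hmem : c < Λ (fillOfChain Λ i c) i :=
    Nat.sInf_mem (s := {s | c < Λ s i}) ⟨n, by simpa [hΛn]⟩
  exact hmem.trans_le (hΛ.mono hle hs i)

theorem fillOfChain_mem_Icc (hΛ : IsBalancedChain k a n Λ) (hΛn : Λ n = P)
    {i c : ℕ} (hc : c < P i) : 1 ≤ fillOfChain Λ i c ∧ fillOfChain Λ i c ≤ n := by
  have hn := (fillOfChain_le_iff hΛ hΛn hc le_rfl).2 (by rwa [hΛn])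
  refine ⟨Nat.one_le_iff_ne_zero.2 fun h0 => ?_, hn⟩
  have := (fillOfChain_le_iff hΛ hΛn hc (Nat.zero_le n)).1 h0.le
  simp [hΛ.eq_rect 0 (Nat.zero_le k), rect] at this

theorem fillOfChain_eq_iff (hΛ : IsBalancedChain k a n Λ) (hΛn : Λ n = P)
    {i c s : ℕ} (hc : c < P i) (hs1 : 1 ≤ s) (hs : s ≤ n) :
    fillOfChain Λ i c = s ↔ Λ (s - 1) i ≤ c ∧ c < Λ s i := by
  rw [← not_lt, ← fillOfChain_le_iff hΛ hΛn hc (by omega), ← fillOfChain_le_iff hΛ hΛn hc hs]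
  omega

theorem card_filter_fillOfChain_eq (hΛ : IsBalancedChain k a n Λ) (hΛn : Λ n = P)
    {i m s : ℕ} (hm : m ≤ P i) (hs1 : 1 ≤ s) (hs : s ≤ n) :
    ((Ico 0 m).filter fun c => fillOfChain Λ i c = s).card = min m (Λ s i) - Λ (s - 1) i := by
  rw [← Nat.card_Ico]
  congr 1
  ext c
  simp only [mem_filter, mem_Ico]
  constructor
  · rintro ⟨⟨-, hcm⟩, hT⟩
    have := (fillOfChain_eq_iff hΛ hΛn (hcm.trans_le hm) hs1 hs).1 hT
    omega
  · rintro ⟨h₁, h₂⟩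
    exact ⟨⟨Nat.zero_le c, by omega⟩,
      (fillOfChain_eq_iff hΛ hΛn (by omega) hs1 hs).2 ⟨h₁, by omega⟩⟩

theorem skewSemistd_fillOfChain (hΛ : IsBalancedChain k a n Λ) (hΛn : Λ n = P) :
    SkewSemistd P (fun _ => 0) (fillOfChain Λ) := by
  refine ⟨fun i j _ hj => ?_, fun i j _ hj => ?_⟩
  · have hT := fillOfChain_mem_Icc hΛ hΛn hj
    have := (fillOfChain_le_iff hΛ hΛn hj hT.2).1 le_rfl
    exact (fillOfChain_le_iff hΛ hΛn (by omega) hT.2).2 (by omega)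
  · have hT := fillOfChain_mem_Icc hΛ hΛn hj
    have h₁ := (fillOfChain_le_iff hΛ hΛn hj hT.2).1 le_rfl
    have h₂ := (hΛ.interlace (fillOfChain Λ (i + 1) j - 1) (by omega) i).1
    rw [Nat.sub_add_cancel hT.1] at h₂
    have hj' : j < P i := hΛn ▸ (h₁.trans_le h₂).trans_le (hΛ.mono (by omega) le_rfl i)
    have := (fillOfChain_le_iff hΛ hΛn hj' (by omega)).2 (h₁.trans_le h₂)
    omega

theorem inAlpha_fillOfChain (hΛ : IsBalancedChain k a n Λ) (hΛn : Λ n = P) :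
    InAlpha P (fun _ => 0) (fillOfChain Λ) 1 n :=
  fun _ _ _ hc => fillOfChain_mem_Icc hΛ hΛn hc

theorem balancedF_fillOfChain (hΛ : IsBalancedChain k a n Λ) (hΛn : Λ n = P) :
    BalancedF n P (fun _ => 0) (fillOfChain Λ) 1 n := by
  intro s hs1 hs
  have hcnt : cntAll n P (fun _ => 0) (fillOfChain Λ) s = a := by
    unfold cntAll
    rw [sum_congr rfl fun i _ => card_filter_fillOfChain_eq hΛ hΛn le_rfl hs1 hs,
      sum_congr rfl fun i _ => by rw [min_eq_right (hΛn ▸ hΛ.mono hs le_rfl i)],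
      sum_tsub_distrib _ fun i _ => hΛ.mono (Nat.sub_le s 1) hs i,
      hΛ.sum_range_eq hs hs, hΛ.sum_range_eq (by omega) (by omega), ← Nat.sub_mul]
    simp [show s - (s - 1) = 1 by omega]
  have hsize : skewSize n P (fun _ => 0) = n * a := by
    simpa [skewSize, hΛn] using hΛ.sum_range_eq le_rfl le_rfl
  rw [hcnt, hsize, Nat.add_sub_cancel]

theorem cntCols_fillOfChain (hΛ : IsBalancedChain k a n Λ) (hΛn : Λ n = P)
    (hkn : k ≤ n) {s : ℕ} (hs1 : 1 ≤ s) (hsk : s ≤ k) (j : ℕ) :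
    cntCols n P (fun _ => 0) (fillOfChain Λ) s j = min j a := by
  unfold cntCols
  have hterm : ∀ i ∈ range n, ((Ico 0 (min j (P i))).filter fun c => fillOfChain Λ i c = s).card
      = if i = s - 1 then min j a else 0 := by
    intro i _
    rw [card_filter_fillOfChain_eq hΛ hΛn (min_le_right _ _) hs1 (hsk.trans hkn)]
    have hP := hΛn ▸ hΛ.mono (hsk.trans hkn) le_rfl i
    rw [hΛ.eq_rect s hsk] at hP
    rw [hΛ.eq_rect s hsk, hΛ.eq_rect (s - 1) (by omega)]
    unfold rect at hP ⊢
    split_ifs at hP ⊢ <;> omega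
  rw [sum_congr rfl hterm, sum_ite_eq' (range n), if_pos (mem_range.2 (by omega))]

end fillOfChain

section counting

variable {n : ℕ} {P Q : ℕ → ℕ} {T : ℕ → ℕ → ℕ} {s j : ℕ}

theorem cntCols_lt_cntAll {i : ℕ} (hi : i < n) (hQ : Q i ≤ j) (hj : j < P i) (hs : T i j = s) :
    cntCols n P Q T s j < cntAll n P Q T s := by
  have hsub : ∀ i, ((Ico (Q i) (min j (P i))).filter fun c => T i c = s) ⊆
      (Ico (Q i) (P i)).filter fun c => T i c = s := fun i =>
    filter_subset_filter _ (Ico_subset_Ico le_rfl (min_le_right _ _))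
  refine sum_lt_sum (fun i _ => card_le_card (hsub i))
    ⟨i, mem_range.2 hi, card_lt_card ⟨hsub i, fun hsub' => ?_⟩⟩
  have := hsub' (mem_filter.2 ⟨mem_Ico.2 ⟨hQ, hj⟩, hs⟩)
  simp only [mem_filter, mem_Ico] at this
  omega

theorem cntCols_eq_cntAll (h : ∀ i c, Q i ≤ c → c < P i → T i c = s → c < j) :
    cntCols n P Q T s j = cntAll n P Q T s := by
  refine sum_congr rfl fun i _ => congrArg card (ext fun c => ?_)
  simp only [mem_filter, mem_Ico, lt_min_iff]
  exact ⟨fun ⟨⟨h₁, _, h₂⟩, h₃⟩ => ⟨⟨h₁, h₂⟩, h₃⟩,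
    fun ⟨⟨h₁, h₂⟩, h₃⟩ => ⟨⟨h₁, h i c h₁ h₂ h₃, h₂⟩, h₃⟩⟩

theorem cntAll_eq_of_balancedF (hbal : BalancedF n P Q T 1 n) (hn : 1 ≤ n) (hs1 : 1 ≤ s)
    (hs : s ≤ n) : cntAll n P Q T s = cntAll n P Q T 1 :=
  Nat.eq_of_mul_eq_mul_left (by omega : 0 < n + 1 - 1)
    ((hbal s hs1 hs).trans (hbal 1 le_rfl hn).symm)

end counting

theorem IsYoung.antitone {n : ℕ} {P : ℕ → ℕ} (hP : IsYoung n P) : Antitone P :=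
  antitone_nat_of_succ_le hP.1

section straightShape

variable {n k : ℕ} {P : ℕ → ℕ} {T : ℕ → ℕ → ℕ}

theorem SkewSemistd.row_le (hT : SkewSemistd P (fun _ => 0) T) {i c c' : ℕ} (hcc : c ≤ c')
    (hc' : c' < P i) : T i c ≤ T i c' := by
  induction c', hcc using Nat.le_induction with
  | base => exact le_rfl
  | succ c' _ ih => exact (ih (by omega)).trans (hT.1 i c' (Nat.zero_le _) hc')

theorem SkewSemistd.add_le_apply_add (hP : IsYoung n P) (hT : SkewSemistd P (fun _ => 0) T)
    {i c : ℕ} (d : ℕ) (hc : c < P (i + d)) : T i c + d ≤ T (i + d) c := by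
  induction d with
  | zero => simp
  | succ d ih =>
    rw [← add_assoc] at hc
    rw [show i + (d + 1) = i + d + 1 by omega]
    have := hT.2 (i + d) c (Nat.zero_le _) hc
    have := ih (hc.trans_le (hP.1 (i + d)))
    omega

theorem SkewSemistd.succ_le_apply (hP : IsYoung n P) (hT : SkewSemistd P (fun _ => 0) T)
    (hα : InAlpha P (fun _ => 0) T 1 n) {i c : ℕ} (hc : c < P i) : i + 1 ≤ T i c := by
  have h₁ := hT.add_le_apply_add hP (i := 0) i (by simpa using hc)
  have h₂ := (hα 0 c (Nat.zero_le c) (hc.trans_le (hP.antitone (Nat.zero_le i)))).1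
  simp only [zero_add] at h₁
  omega

theorem SkewSemistd.lt_cntAll_one (hP : IsYoung n P) (hT : SkewSemistd P (fun _ => 0) T)
    (hα : InAlpha P (fun _ => 0) T 1 n) {i c : ℕ} (hc : c < P i) (h1 : T i c = 1) :
    c < cntAll n P (fun _ => 0) T 1 := by
  obtain rfl : i = 0 := by have := hT.succ_le_apply hP hα hc; omega
  have hn : 0 < n := Nat.pos_of_ne_zero fun hn => by simp [hP.2 0 (by omega)] at hc
  have hrow : range (c + 1) ⊆ (Ico 0 (P 0)).filter fun c' => T 0 c' = 1 := fun c' hc' => by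
    have := mem_range.1 hc'
    have := hT.row_le (i := 0) (by omega : c' ≤ c) hc
    have := (hα 0 c' (Nat.zero_le c') (by omega)).1
    simp only [mem_filter, mem_Ico]
    omega
  calc c < (range (c + 1)).card := by simp
    _ ≤ _ := card_le_card hrow
    _ ≤ cntAll n P (fun _ => 0) T 1 :=
      single_le_sum (f := fun i => ((Ico 0 (P i)).filter fun c' => T i c' = 1).card)
        (fun _ _ => Nat.zero_le _) (mem_range.2 hn)

theorem SkewSemistd.cntAll_one_le_cntCols (hP : IsYoung n P) (hT : SkewSemistd P (fun _ => 0) T)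
    (hα : InAlpha P (fun _ => 0) T 1 n)
    (hcod : ∀ i, 1 ≤ i → i < k → Codom n P (fun _ => 0) T i) {s : ℕ} (hs1 : 1 ≤ s) (hsk : s ≤ k) :
    cntAll n P (fun _ => 0) T 1 ≤ cntCols n P (fun _ => 0) T s (cntAll n P (fun _ => 0) T 1) := by
  induction s, hs1 using Nat.le_induction with
  | base => exact (cntCols_eq_cntAll fun _ _ _ hc h1 => hT.lt_cntAll_one hP hα hc h1).ge
  | succ s hs1 ih => exact (ih (by omega)).trans (hcod s hs1 (by omega) _)

theorem SkewSemistd.sum_cntCols_le (hP : IsYoung n P) (hT : SkewSemistd P (fun _ => 0) T)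
    (hα : InAlpha P (fun _ => 0) T 1 n) (k j : ℕ) :
    ∑ s ∈ Icc 1 k, cntCols n P (fun _ => 0) T s j ≤ ∑ i ∈ range k, min j (P i) := by
  unfold cntCols
  rw [sum_comm]
  calc ∑ i ∈ range n, ∑ s ∈ Icc 1 k, ((Ico 0 (min j (P i))).filter fun c => T i c = s).card
      = ∑ i ∈ range n, ((Ico 0 (min j (P i))).filter fun c => T i c ∈ Icc 1 k).card :=
        sum_congr rfl fun i _ => sum_card_fiberwise_eq_card_filter _ _ _
    _ ≤ ∑ i ∈ range n, if i < k then min j (P i) else 0 := sum_le_sum fun i _ => by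
        split_ifs with hik
        · simpa using card_filter_le (Ico 0 (min j (P i))) _
        · refine (card_eq_zero.2 (filter_eq_empty_iff.2 fun c hc hT' => ?_)).le
          have := hT.succ_le_apply hP hα (lt_min_iff.1 (mem_Ico.1 hc).2).2
          simp only [mem_Icc] at hT'
          omega
    _ ≤ ∑ i ∈ range k, min j (P i) := by
        rw [sum_ite, sum_const_zero, add_zero]
        exact sum_le_sum_of_subset fun i hi => by simp at hi ⊢; omega

theorem SkewSemistd.apply_sub_le_cntAll_one (hP : IsYoung n P)
    (hT : SkewSemistd P (fun _ => 0) T) (hα : InAlpha P (fun _ => 0) T 1 n)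
    (hbal : BalancedF n P (fun _ => 0) T 1 n)
    (hcod : ∀ i, 1 ≤ i → i < k → Codom n P (fun _ => 0) T i) (hk1 : 1 ≤ k) (hkn : k ≤ n) :
    P (n - k) ≤ cntAll n P (fun _ => 0) T 1 := by
  have hmin := fun s => hT.cntAll_one_le_cntCols hP hα hcod (s := s)
  have hcnt := fun s => cntAll_eq_of_balancedF hbal (by omega) (s := s)
  generalize cntAll n P (fun _ => 0) T 1 = a at hmin hcnt ⊢
  by_contra! h
  have ha : a < P 0 := h.trans_le (hP.antitone (Nat.zero_le _))
  have hcol := hT.add_le_apply_add hP (i := 0) (n - k) (by simpa using h)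
  have hbot := (hα (n - k) a (Nat.zero_le a) h).2
  have htop := (hα 0 a (Nat.zero_le a) ha).1
  simp only [zero_add] at hcol
  have hlt := cntCols_lt_cntAll (Q := fun _ => 0) (T := T) (by omega : 0 < n) (Nat.zero_le a) ha rfl
  rw [hcnt _ htop (by omega)] at hlt
  have := hmin _ htop (by omega : T 0 a ≤ k)
  omega

theorem SkewSemistd.cntAll_one_le_apply_sub (hP : IsYoung n P)
    (hT : SkewSemistd P (fun _ => 0) T) (hα : InAlpha P (fun _ => 0) T 1 n)
    (hcod : ∀ i, 1 ≤ i → i < k → Codom n P (fun _ => 0) T i) (hk1 : 1 ≤ k) :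
    cntAll n P (fun _ => 0) T 1 ≤ P (k - 1) := by
  set a := cntAll n P (fun _ => 0) T 1
  by_contra! h
  have hsum := hT.sum_cntCols_le hP hα k a
  have hlow : k * a ≤ ∑ s ∈ Icc 1 k, cntCols n P (fun _ => 0) T s a := by
    simpa using card_nsmul_le_sum (Icc 1 k) _ a fun s hs =>
      hT.cntAll_one_le_cntCols hP hα hcod (mem_Icc.1 hs).1 (mem_Icc.1 hs).2
  obtain ⟨k, rfl⟩ : ∃ k', k = k' + 1 := ⟨k - 1, by omega⟩
  have hrows : ∑ i ∈ range k, min a (P i) ≤ k * a := by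
    simpa using sum_le_card_nsmul (range k) _ a fun i _ => min_le_left _ _
  rw [sum_range_succ] at hsum
  simp only [add_tsub_cancel_right] at h
  have : (k + 1) * a = k * a + a := by ring
  omega

theorem IsYoung.exists_filling (hP : IsYoung n P) {a : ℕ} (hk1 : 1 ≤ k) (hkn : k ≤ n)
    (hsz : ysize n P = n * a) (hlo : P (n - k) ≤ a) (hhi : a ≤ P (k - 1)) :
    ∃ T : ℕ → ℕ → ℕ, SkewSemistd P (fun _ => 0) T ∧ InAlpha P (fun _ => 0) T 1 n ∧
        BalancedF n P (fun _ => 0) T 1 n ∧ ∀ i, 1 ≤ i → i < k → Codom n P (fun _ => 0) T i := by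
  have hadm : IsAdmissible k a n P := ⟨hP.antitone, hP.2, hsz,
    fun i hi => hhi.trans (hP.antitone (by omega)), fun i hi => (hP.antitone hi).trans hlo⟩
  obtain ⟨Λ, hΛ, hΛn⟩ := hadm.exists_isBalancedChain hk1 hkn
  refine ⟨fillOfChain Λ, skewSemistd_fillOfChain hΛ hΛn, inAlpha_fillOfChain hΛ hΛn,
    balancedF_fillOfChain hΛ hΛn, fun i hi1 hik j => ?_⟩
  rw [cntCols_fillOfChain hΛ hΛn hkn hi1 hik.le, cntCols_fillOfChain hΛ hΛn hkn (by omega) hik]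

end straightShape

theorem stmt_5_general (n k : ℕ) (hk1 : 1 ≤ k) (hkn : k ≤ n)
    (P : ℕ → ℕ) (hP : IsYoung n P) :
    (∃ T : ℕ → ℕ → ℕ, SkewSemistd P (fun _ => 0) T ∧ InAlpha P (fun _ => 0) T 1 n ∧
        BalancedF n P (fun _ => 0) T 1 n ∧
        ∀ i, 1 ≤ i → i < k → Codom n P (fun _ => 0) T i) ↔
    (∃ a : ℕ, ysize n P = n * a ∧ P (n - k) ≤ a ∧ a ≤ P (k - 1)) := by
  constructor
  · rintro ⟨T, hT, hα, hbal, hcod⟩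
    refine ⟨cntAll n P (fun _ => 0) T 1, ?_, hT.apply_sub_le_cntAll_one hP hα hbal hcod hk1 hkn,
      hT.cntAll_one_le_apply_sub hP hα hcod hk1⟩
    simpa [skewSize, ysize] using (hbal 1 le_rfl (by omega)).symm
  · rintro ⟨a, hsz, hlo, hhi⟩
    exact hP.exists_filling hk1 hkn hsz hlo hhi

/-- A Young diagram `P` of order `n` admits a balanced semistandard `{1, …, n}`-filling
that is `α_i`-codominant for all `i = 1, …, k-1` if and only if its offset
`a = (#P)/n` is an integer satisfying `#_k P ≥ a ≥ #_{n-k+1} P`. -/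
theorem stmt_5 (n k : ℕ) (hn : 1 ≤ n) (hk1 : 1 ≤ k) (hkn : k ≤ n)
    (P : ℕ → ℕ) (hP : IsYoung n P) :
    (∃ T : ℕ → ℕ → ℕ, SkewSemistd P (fun _ => 0) T ∧ InAlpha P (fun _ => 0) T 1 n ∧
        BalancedF n P (fun _ => 0) T 1 n ∧
        ∀ i, 1 ≤ i → i < k → Codom n P (fun _ => 0) T i) ↔
    (∃ a : ℕ, ysize n P = n * a ∧ P (n - k) ≤ a ∧ a ≤ P (k - 1)) :=
  stmt_5_general n k hk1 hkn P hP
end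

section
/- Let Θ ⊆ Π be a subset of the simple roots of sl_n(ℂ), and suppose k ∈ {1,...,n−1} is such that α_k ∉ Θ. A Young diagram P of order n admits a Θ-codominant balanced semistandard {1,...,n}-filling if and only if there exists a Young diagram Q ⊆ P such that: Q admits a (Θ ∩ {α_1,...,α_{k−1}})-codominant balanced semistandard {1,...,k}-filling; the skew diagram P/Q admits a (Θ ∩ {α_{k+1},...,α_{n−1}})-codominant balanced semistandard {k+1,...,n}-filling; and #Q = (k/n)·#P. -/
/-!
Since rows weakly increase, the boxes of a semistandard filling `T` of `P` carrying entries `≤ k`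
form, row by row, an initial segment; since columns strictly increase, their lengths `Q i`
decrease and vanish from row `k` on, as row `i` only carries entries `≥ i + 1`. So `T` restricts
to a filling of `Q` by `{1, …, k}` and of `P/Q` by `{k+1, …, n}`, and conversely two such fillings
glue to a semistandard filling of `P`. As `α_k ∉ Θ`, each codominance condition compares two
symbols on the same side of the cut. A balanced filling of `P` uses every symbol `c = #P / n`
times, whence `#Q = k c`; conversely, if the two parts use their symbols `a` resp. `b` times,
then `n #Q = k #P` reads `n k a = k (k a + (n - k) b)`, forcing `a = b`.
-/

open Finset

def EqOnSkew (P Q : ℕ → ℕ) (T T' : ℕ → ℕ → ℕ) : Prop :=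
  ∀ i c, Q i ≤ c → c < P i → T i c = T' i c

section Fillings

variable {n m k lo hi s j : ℕ} {P Q R : ℕ → ℕ} {T T' : ℕ → ℕ → ℕ}

theorem SkewSemistd.row_mono (hT : SkewSemistd P Q T) {i a b : ℕ} (ha : Q i ≤ a) (hab : a ≤ b)
    (hb : b < P i) : T i a ≤ T i b := by
  induction b, hab using Nat.le_induction with
  | base => rfl
  | succ b hab ih => exact (ih (by omega)).trans (hT.1 i b (ha.trans hab) hb)

theorem SkewSemistd.add_le_of_inAlpha (hT : SkewSemistd P (fun _ => 0) T)
    (hP : ∀ i, P (i + 1) ≤ P i) (hα : InAlpha P (fun _ => 0) T lo hi) :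
    ∀ i c, c < P i → lo + i ≤ T i c := by
  intro i
  induction i with
  | zero => exact fun c hc => (hα 0 c (Nat.zero_le _) hc).1
  | succ i ih =>
    intro c hc
    have := ih c (hc.trans_le (hP i))
    have := hT.2 i c (Nat.zero_le _) hc
    omega

theorem SkewSemistd.of_le_outer (hT : SkewSemistd P Q T) (hRP : ∀ i, R i ≤ P i) :
    SkewSemistd R Q T :=
  ⟨fun i c hc hcR => hT.1 i c hc (hcR.trans_le (hRP i)),
    fun i c hc hcR => hT.2 i c hc (hcR.trans_le (hRP (i + 1)))⟩

theorem SkewSemistd.of_le_inner (hT : SkewSemistd P Q T) (hQR : ∀ i, Q i ≤ R i) :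
    SkewSemistd P R T :=
  ⟨fun i c hc => hT.1 i c ((hQR i).trans hc), fun i c hc => hT.2 i c ((hQR i).trans hc)⟩

theorem skewSemistd_congr (hP : ∀ i, P (i + 1) ≤ P i) (hQ : ∀ i, Q (i + 1) ≤ Q i)
    (h : EqOnSkew P Q T T') : SkewSemistd P Q T ↔ SkewSemistd P Q T' := by
  suffices ∀ {T T'}, EqOnSkew P Q T T' → SkewSemistd P Q T → SkewSemistd P Q T' from
    ⟨this h, this fun i c hc hcP => (h i c hc hcP).symm⟩
  rintro T T' h ⟨hrow, hcol⟩
  refine ⟨fun i c hc hcP => ?_, fun i c hc hcP => ?_⟩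
  · rw [← h i c hc (by omega), ← h i (c + 1) (by omega) hcP]
    exact hrow i c hc hcP
  · rw [← h i c hc (hcP.trans_le (hP i)), ← h (i + 1) c ((hQ i).trans hc) hcP]
    exact hcol i c hc hcP

theorem inAlpha_congr (h : EqOnSkew P Q T T') : InAlpha P Q T lo hi ↔ InAlpha P Q T' lo hi :=
  forall_congr' fun i => forall_congr' fun c => forall_congr' fun hc => forall_congr' fun hcP => by
    rw [h i c hc hcP]

theorem cntCols_congr (h : EqOnSkew P Q T T') : cntCols n P Q T s j = cntCols n P Q T' s j := by
  refine sum_congr rfl fun i _ => congrArg card (filter_congr fun c hc => ?_)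
  rw [mem_Ico, lt_min_iff] at hc
  rw [h i c hc.1 hc.2.2]

theorem cntAll_congr (h : EqOnSkew P Q T T') : cntAll n P Q T s = cntAll n P Q T' s := by
  refine sum_congr rfl fun i _ => congrArg card (filter_congr fun c hc => ?_)
  rw [mem_Ico] at hc
  rw [h i c hc.1 hc.2]

theorem balancedF_congr (h : EqOnSkew P Q T T') :
    BalancedF n P Q T lo hi ↔ BalancedF n P Q T' lo hi := by
  simp only [BalancedF, cntAll_congr h]

theorem codom_congr (h : EqOnSkew P Q T T') : Codom n P Q T s ↔ Codom n P Q T' s := by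
  simp only [Codom, cntCols_congr h]

theorem cntAll_eq_cntCols (hj : ∀ i < n, P i ≤ j) : cntAll n P Q T s = cntCols n P Q T s j :=
  sum_congr rfl fun i hi => by rw [min_eq_right (hj i (mem_range.1 hi))]

theorem cntCols_eq_of_le (hmn : m ≤ n) (hP : ∀ i, m ≤ i → P i = 0) :
    cntCols n P Q T s j = cntCols m P Q T s j :=
  (sum_subset (range_subset_range.2 hmn) fun i _ hi => by
    simp [hP i (by simpa using hi)]).symm

theorem skewSize_zero_right : skewSize n P (fun _ => 0) = ysize n P := by
  simp [skewSize, ysize]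

theorem ysize_add_skewSize (hQP : ∀ i, Q i ≤ P i) (hQk : ∀ i, k ≤ i → Q i = 0) (hkn : k ≤ n) :
    ysize k Q + skewSize n P Q = ysize n P := by
  have hQ : ysize k Q = ∑ i ∈ range n, Q i :=
    sum_subset (range_subset_range.2 hkn) fun i _ hi => hQk i (by simpa using hi)
  rw [hQ, skewSize, ysize, ← sum_add_distrib]
  exact sum_congr rfl fun i _ => Nat.add_sub_cancel' (hQP i)

theorem skewSize_eq_sum_cntAll (hα : InAlpha P Q T lo hi) :
    skewSize n P Q = ∑ s ∈ Icc lo hi, cntAll n P Q T s := by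
  unfold skewSize cntAll
  rw [sum_comm]
  refine sum_congr rfl fun i _ => ?_
  rw [← Nat.card_Ico (Q i) (P i)]
  exact card_eq_sum_card_fiberwise fun c hc => by
    rw [coe_Ico, Set.mem_Ico] at hc
    exact mem_coe.2 (mem_Icc.2 (hα i c hc.1 hc.2))

theorem skewSize_eq_mul {c : ℕ} (hα : InAlpha P Q T lo hi)
    (hc : ∀ s, lo ≤ s → s ≤ hi → cntAll n P Q T s = c) :
    skewSize n P Q = (hi + 1 - lo) * c := by
  rw [skewSize_eq_sum_cntAll hα,
    sum_congr rfl fun s hs => hc s (mem_Icc.1 hs).1 (mem_Icc.1 hs).2, sum_const, Nat.card_Icc,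
    smul_eq_mul]

theorem balancedF_iff_exists (hα : InAlpha P Q T lo hi) :
    BalancedF n P Q T lo hi ↔ ∃ c, ∀ s, lo ≤ s → s ≤ hi → cntAll n P Q T s = c := by
  constructor
  · intro h
    exact ⟨cntAll n P Q T lo, fun s hs hsh => Nat.eq_of_mul_eq_mul_left (by omega)
      ((h s hs hsh).trans (h lo le_rfl (hs.trans hsh)).symm)⟩
  · rintro ⟨c, hc⟩ s hs hsh
    rw [skewSize_eq_mul hα hc, hc s hs hsh]

end Fillings

def IsLowerPart (k : ℕ) (P Q : ℕ → ℕ) (T : ℕ → ℕ → ℕ) : Prop :=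
  ∀ i c, c < Q i ↔ c < P i ∧ T i c ≤ k

namespace IsLowerPart

variable {n k s j : ℕ} {P Q : ℕ → ℕ} {T : ℕ → ℕ → ℕ}

theorem le (h : IsLowerPart k P Q T) (i : ℕ) : Q i ≤ P i := by
  by_contra! hlt
  exact lt_irrefl _ ((h i (P i)).1 hlt).1

theorem le_of_lt (h : IsLowerPart k P Q T) {i c : ℕ} (hc : c < Q i) : T i c ≤ k :=
  ((h i c).1 hc).2

theorem lt_of_le (h : IsLowerPart k P Q T) {i c : ℕ} (hc : Q i ≤ c) (hcP : c < P i) :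
    k < T i c := by
  by_contra! hT
  exact absurd ((h i c).2 ⟨hcP, hT⟩) (not_lt.2 hc)

theorem inAlpha_iff (h : IsLowerPart k P Q T) (hkn : k ≤ n) :
    InAlpha P (fun _ => 0) T 1 n ↔
      InAlpha Q (fun _ => 0) T 1 k ∧ InAlpha P Q T (k + 1) n := by
  constructor
  · intro hα
    exact ⟨fun i c _ hc => ⟨(hα i c (Nat.zero_le _) ((h i c).1 hc).1).1, h.le_of_lt hc⟩,
      fun i c hc hcP => ⟨h.lt_of_le hc hcP, (hα i c (Nat.zero_le _) hcP).2⟩⟩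
  · rintro ⟨hαQ, hαS⟩ i c _ hc
    by_cases hcQ : c < Q i
    · have := hαQ i c (Nat.zero_le _) hcQ
      omega
    · have := hαS i c (not_lt.1 hcQ) hc
      omega

theorem skewSemistd_iff (h : IsLowerPart k P Q T) :
    SkewSemistd P (fun _ => 0) T ↔ SkewSemistd Q (fun _ => 0) T ∧ SkewSemistd P Q T := by
  refine ⟨fun hT => ⟨hT.of_le_outer h.le, hT.of_le_inner fun _ => Nat.zero_le _⟩, ?_⟩
  rintro ⟨hTQ, hTS⟩
  refine ⟨fun i c _ hc => ?_, fun i c _ hc => ?_⟩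
  · rcases lt_or_ge (c + 1) (Q i) with hcQ | hcQ
    · exact hTQ.1 i c (Nat.zero_le _) hcQ
    rcases lt_or_ge c (Q i) with hcQ' | hcQ'
    · exact (h.le_of_lt hcQ').trans (h.lt_of_le hcQ hc).le
    · exact hTS.1 i c hcQ' hc
  · rcases lt_or_ge c (Q (i + 1)) with hcQ | hcQ
    · exact hTQ.2 i c (Nat.zero_le _) hcQ
    rcases lt_or_ge c (Q i) with hcQ' | hcQ'
    · exact (h.le_of_lt hcQ').trans_lt (h.lt_of_le hcQ hc)
    · exact hTS.2 i c hcQ' hc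

theorem cntCols_of_le (h : IsLowerPart k P Q T) (hQk : ∀ i, k ≤ i → Q i = 0) (hkn : k ≤ n)
    (hs : s ≤ k) : cntCols n P (fun _ => 0) T s j = cntCols k Q (fun _ => 0) T s j := by
  rw [← cntCols_eq_of_le hkn hQk]
  refine sum_congr rfl fun i _ => congrArg card ?_
  ext c
  have := h i c
  simp only [mem_filter, mem_Ico, lt_min_iff]
  constructor <;> rintro ⟨hc, rfl⟩ <;> omega

theorem cntCols_of_lt (h : IsLowerPart k P Q T) (hs : k < s) :
    cntCols n P (fun _ => 0) T s j = cntCols n P Q T s j := by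
  refine sum_congr rfl fun i _ => congrArg card ?_
  ext c
  have := h i c
  simp only [mem_filter, mem_Ico, lt_min_iff]
  constructor <;> rintro ⟨hc, rfl⟩ <;> omega

theorem cntAll_of_le (h : IsLowerPart k P Q T) (hQk : ∀ i, k ≤ i → Q i = 0) (hkn : k ≤ n)
    (hs : s ≤ k) : cntAll n P (fun _ => 0) T s = cntAll k Q (fun _ => 0) T s := by
  have hP : ∀ i < n, P i ≤ ysize n P := fun i hi =>
    single_le_sum (fun _ _ => Nat.zero_le _) (mem_range.2 hi)
  rw [cntAll_eq_cntCols hP, cntAll_eq_cntCols fun i hi => (h.le i).trans (hP i (by omega)),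
    h.cntCols_of_le hQk hkn hs]

theorem cntAll_of_lt (h : IsLowerPart k P Q T) (hs : k < s) :
    cntAll n P (fun _ => 0) T s = cntAll n P Q T s := by
  have hP : ∀ i < n, P i ≤ ysize n P := fun i hi =>
    single_le_sum (fun _ _ => Nat.zero_le _) (mem_range.2 hi)
  rw [cntAll_eq_cntCols hP, cntAll_eq_cntCols hP, h.cntCols_of_lt hs]

theorem codom_iff_of_lt (h : IsLowerPart k P Q T) (hQk : ∀ i, k ≤ i → Q i = 0) (hkn : k ≤ n)
    {i : ℕ} (hi : i < k) : Codom n P (fun _ => 0) T i ↔ Codom k Q (fun _ => 0) T i := by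
  simp only [Codom, h.cntCols_of_le hQk hkn hi.le, h.cntCols_of_le hQk hkn (s := i + 1) hi]

theorem codom_iff_of_gt (h : IsLowerPart k P Q T) {i : ℕ} (hi : k < i) :
    Codom n P (fun _ => 0) T i ↔ Codom n P Q T i := by
  simp only [Codom, h.cntCols_of_lt hi, h.cntCols_of_lt (hi.trans (Nat.lt_succ_self i))]

theorem balancedF_iff (h : IsLowerPart k P Q T) (hQk : ∀ i, k ≤ i → Q i = 0)
    (hα : InAlpha P (fun _ => 0) T 1 n) (hk : 1 ≤ k) (hkn : k < n) :
    BalancedF n P (fun _ => 0) T 1 n ↔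
      BalancedF k Q (fun _ => 0) T 1 k ∧ BalancedF n P Q T (k + 1) n ∧
        n * ysize k Q = k * ysize n P := by
  obtain ⟨hαQ, hαS⟩ := (h.inAlpha_iff hkn.le).1 hα
  rw [balancedF_iff_exists hα, balancedF_iff_exists hαQ, balancedF_iff_exists hαS]
  constructor
  · rintro ⟨c, hc⟩
    have hcQ : ∀ s, 1 ≤ s → s ≤ k → cntAll k Q (fun _ => 0) T s = c := fun s hs hsk =>
      (h.cntAll_of_le hQk hkn.le hsk).symm.trans (hc s hs (hsk.trans hkn.le))
    have hcS : ∀ s, k + 1 ≤ s → s ≤ n → cntAll n P Q T s = c := fun s hs hsn =>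
      (h.cntAll_of_lt hs).symm.trans (hc s (by omega) hsn)
    have hP := skewSize_eq_mul hα hc
    have hQ := skewSize_eq_mul hαQ hcQ
    rw [skewSize_zero_right, Nat.add_sub_cancel] at hP hQ
    exact ⟨⟨c, hcQ⟩, ⟨c, hcS⟩, by rw [hP, hQ]; ring⟩
  · rintro ⟨⟨a, ha⟩, ⟨b, hb⟩, hsize⟩
    have hQ := skewSize_eq_mul hαQ ha
    have hS := skewSize_eq_mul hαS hb
    rw [skewSize_zero_right, Nat.add_sub_cancel] at hQ
    rw [Nat.add_sub_add_right] at hS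
    have hab : a = b := by
      rw [← ysize_add_skewSize h.le hQk hkn.le, hQ, hS] at hsize
      refine Nat.eq_of_mul_eq_mul_left (Nat.mul_pos hk (Nat.sub_pos_of_lt hkn)) ?_
      zify [hkn.le] at hsize ⊢
      linear_combination hsize
    refine ⟨a, fun s hs hsn => ?_⟩
    rcases le_or_gt s k with hsk | hsk
    · rw [h.cntAll_of_le hQk hkn.le hsk, ha s hs hsk]
    · rw [h.cntAll_of_lt hsk, hb s hsk hsn, hab]

end IsLowerPart

section LowerPart

variable {n k lo hi : ℕ} {P Q : ℕ → ℕ} {T TQ TS : ℕ → ℕ → ℕ}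

def lowerPart (k : ℕ) (P : ℕ → ℕ) (T : ℕ → ℕ → ℕ) (i : ℕ) : ℕ :=
  Nat.findGreatest (fun m => ∀ c < m, T i c ≤ k) (P i)

theorem isLowerPart_lowerPart (hT : SkewSemistd P (fun _ => 0) T) :
    IsLowerPart k P (lowerPart k P T) T := by
  intro i c
  constructor
  · intro hc
    exact ⟨hc.trans_le (Nat.findGreatest_le _),
      Nat.findGreatest_spec (P := fun m => ∀ c < m, T i c ≤ k) (Nat.zero_le _)
        (fun _ h => absurd h (Nat.not_lt_zero _)) c hc⟩
  · rintro ⟨hcP, hck⟩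
    exact Nat.le_findGreatest hcP fun c' hc' =>
      (hT.row_mono (Nat.zero_le _) (Nat.lt_succ_iff.1 hc') hcP).trans hck

theorem isYoung_lowerPart (hP : ∀ i, P (i + 1) ≤ P i) (hT : SkewSemistd P (fun _ => 0) T)
    (hα : InAlpha P (fun _ => 0) T 1 n) : IsYoung k (lowerPart k P T) := by
  have h : IsLowerPart k P (lowerPart k P T) T := isLowerPart_lowerPart hT
  refine ⟨fun i => ?_, fun i hi => ?_⟩
  · by_contra! hlt
    obtain ⟨hcP, hck⟩ := (h (i + 1) _).1 hlt
    exact lt_irrefl _ ((h i _).2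
      ⟨hcP.trans_le (hP i), ((hT.2 i _ (Nat.zero_le _) hcP).trans_le hck).le⟩)
  · by_contra! hpos
    obtain ⟨hcP, hck⟩ := (h i 0).1 (Nat.pos_of_ne_zero hpos)
    have := hT.add_le_of_inAlpha hP hα i 0 hcP
    omega

def glueFilling (Q : ℕ → ℕ) (TQ TS : ℕ → ℕ → ℕ) (i c : ℕ) : ℕ :=
  if c < Q i then TQ i c else TS i c

theorem eqOnSkew_glueFilling_left : EqOnSkew Q (fun _ => 0) (glueFilling Q TQ TS) TQ :=
  fun _ _ _ hc => if_pos hc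

theorem eqOnSkew_glueFilling_right : EqOnSkew P Q (glueFilling Q TQ TS) TS :=
  fun _ _ hc _ => if_neg (not_lt.2 hc)

theorem isLowerPart_glueFilling (hQP : ∀ i, Q i ≤ P i) (hαQ : InAlpha Q (fun _ => 0) TQ lo k)
    (hαS : InAlpha P Q TS (k + 1) hi) : IsLowerPart k P Q (glueFilling Q TQ TS) := by
  intro i c
  unfold glueFilling
  split_ifs with hc
  · exact iff_of_true hc ⟨hc.trans_le (hQP i), (hαQ i c (Nat.zero_le _) hc).2⟩
  · refine iff_of_false hc fun ⟨hcP, hck⟩ => ?_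
    have := (hαS i c (not_lt.1 hc) hcP).1
    omega

end LowerPart

theorem stmt_10_general (n k : ℕ) (hk1 : 1 ≤ k) (hkn : k ≤ n - 1)
    (Θ : Finset ℕ) (hkΘ : k ∉ Θ)
    (P : ℕ → ℕ) (hP : IsYoung n P) :
    (∃ T : ℕ → ℕ → ℕ, SkewSemistd P (fun _ => 0) T ∧ InAlpha P (fun _ => 0) T 1 n ∧
        BalancedF n P (fun _ => 0) T 1 n ∧ ∀ i ∈ Θ, Codom n P (fun _ => 0) T i) ↔
    (∃ Q : ℕ → ℕ, IsYoung k Q ∧ (∀ i, Q i ≤ P i) ∧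
      (∃ TQ : ℕ → ℕ → ℕ, SkewSemistd Q (fun _ => 0) TQ ∧ InAlpha Q (fun _ => 0) TQ 1 k ∧
          BalancedF k Q (fun _ => 0) TQ 1 k ∧
          ∀ i ∈ Θ, i < k → Codom k Q (fun _ => 0) TQ i) ∧
      (∃ TS : ℕ → ℕ → ℕ, SkewSemistd P Q TS ∧ InAlpha P Q TS (k + 1) n ∧
          BalancedF n P Q TS (k + 1) n ∧
          ∀ i ∈ Θ, k < i → Codom n P Q TS i) ∧
      n * ysize k Q = k * ysize n P) := by
  have hkn' : k < n := by omega
  constructor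
  · rintro ⟨T, hT, hα, hbal, hcod⟩
    have hQ : IsYoung k (lowerPart k P T) := isYoung_lowerPart hP.1 hT hα
    have h : IsLowerPart k P (lowerPart k P T) T := isLowerPart_lowerPart hT
    obtain ⟨hTQ, hTS⟩ := h.skewSemistd_iff.1 hT
    obtain ⟨hαQ, hαS⟩ := (h.inAlpha_iff hkn'.le).1 hα
    obtain ⟨hbalQ, hbalS, hsize⟩ := (h.balancedF_iff hQ.2 hα hk1 hkn').1 hbal
    exact ⟨lowerPart k P T, hQ, h.le,
      ⟨T, hTQ, hαQ, hbalQ, fun i hi hik => (h.codom_iff_of_lt hQ.2 hkn'.le hik).1 (hcod i hi)⟩,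
      ⟨T, hTS, hαS, hbalS, fun i hi hki => (h.codom_iff_of_gt hki).1 (hcod i hi)⟩, hsize⟩
  · rintro ⟨Q, hQ, hQP, ⟨TQ, hTQ, hαQ, hbalQ, hcodQ⟩, ⟨TS, hTS, hαS, hbalS, hcodS⟩, hsize⟩
    have hQT : EqOnSkew Q (fun _ => 0) (glueFilling Q TQ TS) TQ := eqOnSkew_glueFilling_left
    have hST : EqOnSkew P Q (glueFilling Q TQ TS) TS := eqOnSkew_glueFilling_right
    have h := isLowerPart_glueFilling hQP hαQ hαS
    have hα := (h.inAlpha_iff hkn'.le).2 ⟨(inAlpha_congr hQT).2 hαQ, (inAlpha_congr hST).2 hαS⟩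
    refine ⟨glueFilling Q TQ TS,
      h.skewSemistd_iff.2 ⟨(skewSemistd_congr hQ.1 (fun _ => le_rfl) hQT).2 hTQ,
        (skewSemistd_congr hP.1 hQ.1 hST).2 hTS⟩, hα,
      (h.balancedF_iff hQ.2 hα hk1 hkn').2
        ⟨(balancedF_congr hQT).2 hbalQ, (balancedF_congr hST).2 hbalS, hsize⟩, fun i hi => ?_⟩
    rcases lt_or_gt_of_ne (ne_of_mem_of_not_mem hi hkΘ) with hik | hki
    · exact (h.codom_iff_of_lt hQ.2 hkn'.le hik).2 ((codom_congr hQT).2 (hcodQ i hi hik))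
    · exact (h.codom_iff_of_gt hki).2 ((codom_congr hST).2 (hcodS i hi hki))

/-- Divide-and-conquer lemma: if `α_k ∉ Θ`, a Young diagram `P` of order `n` admits a
`Θ`-codominant balanced semistandard `{1, …, n}`-filling iff there is `Q ⊆ P` with
`#Q = (k/n)·#P` such that `Q` admits a `(Θ ∩ {α₁,…,α_{k-1}})`-codominant balanced
semistandard `{1,…,k}`-filling and `P/Q` admits a `(Θ ∩ {α_{k+1},…,α_{n-1}})`-codominant
balanced semistandard `{k+1,…,n}`-filling. -/
theorem stmt_10 (n k : ℕ) (hn : 2 ≤ n) (hk1 : 1 ≤ k) (hkn : k ≤ n - 1)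
    (Θ : Finset ℕ) (hΘ : ∀ i ∈ Θ, 1 ≤ i ∧ i ≤ n - 1) (hkΘ : k ∉ Θ)
    (P : ℕ → ℕ) (hP : IsYoung n P) :
    (∃ T : ℕ → ℕ → ℕ, SkewSemistd P (fun _ => 0) T ∧ InAlpha P (fun _ => 0) T 1 n ∧
        BalancedF n P (fun _ => 0) T 1 n ∧ ∀ i ∈ Θ, Codom n P (fun _ => 0) T i) ↔
    (∃ Q : ℕ → ℕ, IsYoung k Q ∧ (∀ i, Q i ≤ P i) ∧
      (∃ TQ : ℕ → ℕ → ℕ, SkewSemistd Q (fun _ => 0) TQ ∧ InAlpha Q (fun _ => 0) TQ 1 k ∧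
          BalancedF k Q (fun _ => 0) TQ 1 k ∧
          ∀ i ∈ Θ, i < k → Codom k Q (fun _ => 0) TQ i) ∧
      (∃ TS : ℕ → ℕ → ℕ, SkewSemistd P Q TS ∧ InAlpha P Q TS (k + 1) n ∧
          BalancedF n P Q TS (k + 1) n ∧
          ∀ i ∈ Θ, k < i → Codom n P Q TS i) ∧
      n * ysize k Q = k * ysize n P) :=
  stmt_10_general n k hk1 hkn Θ hkΘ P hP
end
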